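/- arXiv:2402.15145 — 7 statements merged into one kernel-verified Lean document; each statement's English description precedes it below -/
import Mathlib

section
/- There is a universal constant C > 0 such that for every real ε ∈ (0, 1/2), every integer n ≥ 1, and every possibly randomized algorithm f mapping {0,1}^n to {±1} (i.e., f maps each input x ∈ {0,1}^n to a probability distribution over {±1}), it holds that E_{b ∼ Unif{±1}}[ P_{x ∼ Ber((1+bε)/2)^n, y ∼ f(x)}[y ≠ b] ] ≥ exp(−C·(ε²·n + 1)). -/
open Finset

noncomputable section

/-- The ±1 sign associated to a Boolean (`true ↦ +1`, `false ↦ -1`). -/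
def sgn (b : Bool) : ℝ := if b then 1 else -1

/-- **Information-theoretic lower bound for the coin problem.**
There is a universal constant `C > 0` such that for every `ε ∈ (0, 1/2)`, every `n ≥ 1`,
and every randomized algorithm `f` mapping `{0,1}ⁿ` to a distribution over `{±1}`
(here `f x b` is the probability that `f` outputs the sign `b` on input `x`), the
average over a uniform sign `b` of the probability (over `x ∼ Ber((1+bε)/2)ⁿ` and the
randomness of `f`) that the output differs from `b` is at least `exp(-C(ε²n + 1))`. -/
theorem coin_problem_lower_bound :
    ∃ C : ℝ, 0 < C ∧
      ∀ ε : ℝ, 0 < ε → ε < 1 / 2 →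
      ∀ n : ℕ, 1 ≤ n →
      ∀ f : (Fin n → Bool) → Bool → ℝ,
        (∀ x b, 0 ≤ f x b) → (∀ x, f x true + f x false = 1) →
        (1 / 2) * ∑ b : Bool, ∑ x : Fin n → Bool,
            (∏ i, if x i then (1 + sgn b * ε) / 2 else (1 - sgn b * ε) / 2) * f x (!b)
          ≥ Real.exp (-(C * (ε ^ 2 * n + 1))) := by
  refine ⟨2, by norm_num, ?_⟩
  intro ε hε hε2 n hn f hf hsum
  have hε2' : ε ^ 2 < 1 / 4 := by nlinarith
  set p : (Fin n → Bool) → ℝ := fun x => ∏ i, if x i then (1 + ε) / 2 else (1 - ε) / 2 with hp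
  set q : (Fin n → Bool) → ℝ := fun x => ∏ i, if x i then (1 - ε) / 2 else (1 + ε) / 2 with hq
  -- positivity of the product measures
  have hp0 : ∀ x, 0 < p x := by
    intro x
    apply Finset.prod_pos
    intro i _
    by_cases h : x i <;> simp [h] <;> linarith
  have hq0 : ∀ x, 0 < q x := by
    intro x
    apply Finset.prod_pos
    intro i _
    by_cases h : x i <;> simp [h] <;> linarith
  -- the product p x * q x is constant
  have h1eps : (0 : ℝ) < 1 - ε ^ 2 := by nlinarith
  have hpq : ∀ x, p x * q x = ((1 - ε ^ 2) / 4) ^ n := by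
    intro x
    rw [hp, hq, ← Finset.prod_mul_distrib]
    have hfac : ∀ i ∈ (univ : Finset (Fin n)),
        ((if x i then (1 + ε) / 2 else (1 - ε) / 2) *
          if x i then (1 - ε) / 2 else (1 + ε) / 2) = (1 - ε ^ 2) / 4 := by
      intro i _
      by_cases h : x i <;> simp [h] <;> ring
    rw [Finset.prod_congr rfl hfac, Finset.prod_const, Finset.card_univ, Fintype.card_fin]
  -- total masses
  have hsp : ∑ x, p x = 1 := by
    have h := Fintype.prod_sum (fun (_ : Fin n) (b : Bool) => if b then (1 + ε) / 2 else (1 - ε) / 2)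
    have h1 : (∑ b : Bool, if b then (1 + ε) / 2 else (1 - ε) / 2) = (1 : ℝ) := by
      rw [Fintype.sum_bool]; norm_num; ring
    rw [hp, ← h, Finset.prod_congr rfl (fun i _ => h1), Finset.prod_const_one]
  have hsq : ∑ x, q x = 1 := by
    have h := Fintype.prod_sum (fun (_ : Fin n) (b : Bool) => if b then (1 - ε) / 2 else (1 + ε) / 2)
    have h1 : (∑ b : Bool, if b then (1 - ε) / 2 else (1 + ε) / 2) = (1 : ℝ) := by
      rw [Fintype.sum_bool]; norm_num; ring
    rw [hq, ← h, Finset.prod_congr rfl (fun i _ => h1), Finset.prod_const_one]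
  -- rewrite the LHS
  have hL : ∑ b : Bool, ∑ x : Fin n → Bool,
      (∏ i, if x i then (1 + sgn b * ε) / 2 else (1 - sgn b * ε) / 2) * f x (!b)
      = ∑ x, (p x * f x false + q x * f x true) := by
    rw [Fintype.sum_bool, ← Finset.sum_add_distrib]
    apply Finset.sum_congr rfl
    intro x _
    have e1 : (∏ i, if x i then (1 + sgn true * ε) / 2 else (1 - sgn true * ε) / 2) = p x := by
      apply Finset.prod_congr rfl
      intro i _
      by_cases h : x i <;> simp [h, sgn]
    have e2 : (∏ i, if x i then (1 + sgn false * ε) / 2 else (1 - sgn false * ε) / 2) = q x := by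
      apply Finset.prod_congr rfl
      intro i _
      by_cases h : x i <;> simp [h, sgn] <;> ring
    rw [e1, e2]
    simp
  -- pointwise lower bound
  have hpt : ∀ x, p x * q x / (p x + q x) ≤ p x * f x false + q x * f x true := by
    intro x
    have hppq : 0 < p x + q x := by linarith [hp0 x, hq0 x]
    have hmin : min (p x) (q x) ≤ p x * f x false + q x * f x true := by
      have h1 := mul_nonneg (sub_nonneg.2 (min_le_left (p x) (q x))) (hf x false)
      have h2 := mul_nonneg (sub_nonneg.2 (min_le_right (p x) (q x))) (hf x true)
      have h3 := hsum x
      nlinarith [min_le_left (p x) (q x), min_le_right (p x) (q x)]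
    refine le_trans ?_ hmin
    rw [div_le_iff₀ hppq]
    rcases le_total (p x) (q x) with h | h
    · rw [min_eq_left h]; nlinarith [hp0 x, hq0 x]
    · rw [min_eq_right h]; nlinarith [hp0 x, hq0 x]
  -- AM-HM via Sedrakyan
  have hsed : ((2 : ℝ) ^ n) ^ 2 / 2 ≤ ∑ x, 1 / (p x + q x) := by
    have h := Finset.sq_sum_div_le_sum_sq_div (univ : Finset (Fin n → Bool))
      (fun _ => (1 : ℝ)) (g := fun x => p x + q x)
      (fun x _ => add_pos (hp0 x) (hq0 x))
    have hc : ∑ _x : Fin n → Bool, (1 : ℝ) = 2 ^ n := by simp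
    have hs2 : ∑ x, (p x + q x) = 2 := by
      rw [Finset.sum_add_distrib, hsp, hsq]; norm_num
    simpa [hc, hs2] using h
  -- main bound
  have main : (1 - ε ^ 2) ^ n / 2 ≤ ∑ x, (p x * f x false + q x * f x true) := by
    have h44 : ((2 : ℝ) ^ n) ^ 2 = 4 ^ n := by
      rw [← pow_mul, mul_comm, pow_mul]; norm_num
    have hKnn : (0 : ℝ) ≤ ((1 - ε ^ 2) / 4) ^ n := le_of_lt (pow_pos (by nlinarith) n)
    calc (1 - ε ^ 2) ^ n / 2
        = ((1 - ε ^ 2) / 4) ^ n * (((2 : ℝ) ^ n) ^ 2 / 2) := by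
          rw [h44, div_pow]; field_simp
      _ ≤ ((1 - ε ^ 2) / 4) ^ n * ∑ x, 1 / (p x + q x) := by
          exact mul_le_mul_of_nonneg_left hsed hKnn
      _ = ∑ x, p x * q x / (p x + q x) := by
          rw [Finset.mul_sum]
          apply Finset.sum_congr rfl
          intro x _
          rw [mul_one_div, hpq x]
      _ ≤ _ := Finset.sum_le_sum (fun x _ => hpt x)
  -- exponential estimate
  have hexp : Real.exp (-(2 * (ε ^ 2 * n + 1))) ≤ (1 - ε ^ 2) ^ n / 4 := by
    have key : Real.exp (-(2 * ε ^ 2)) ≤ 1 - ε ^ 2 := by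
      have h1 : 1 + 2 * ε ^ 2 ≤ Real.exp (2 * ε ^ 2) := by
        have := Real.add_one_le_exp (2 * ε ^ 2); linarith
      have hx : (0 : ℝ) < Real.exp (2 * ε ^ 2) := Real.exp_pos _
      rw [Real.exp_neg, inv_eq_one_div, div_le_iff₀ hx]
      nlinarith
    have h2e : (2 : ℝ) ≤ Real.exp 1 := by
      have := Real.add_one_le_exp (1 : ℝ); linarith
    have hexp2 : Real.exp (-2) ≤ 1 / 4 := by
      rw [Real.exp_neg, inv_eq_one_div, div_le_div_iff₀ (Real.exp_pos 2) (by norm_num)]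
      rw [show (2 : ℝ) = 1 + 1 by norm_num, Real.exp_add]
      nlinarith
    have hsplit : Real.exp (-(2 * (ε ^ 2 * n + 1)))
        = Real.exp (-(2 * ε ^ 2)) ^ n * Real.exp (-2) := by
      rw [← Real.exp_nat_mul, ← Real.exp_add]
      ring_nf
    rw [hsplit]
    have hb : Real.exp (-(2 * ε ^ 2)) ^ n ≤ (1 - ε ^ 2) ^ n :=
      pow_le_pow_left₀ (Real.exp_nonneg _) key n
    have h1e : (0 : ℝ) ≤ (1 - ε ^ 2) ^ n := le_of_lt (pow_pos h1eps n)
    calc Real.exp (-(2 * ε ^ 2)) ^ n * Real.exp (-2)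
        ≤ (1 - ε ^ 2) ^ n * (1 / 4) :=
          mul_le_mul hb hexp2 (Real.exp_nonneg _) h1e
      _ = (1 - ε ^ 2) ^ n / 4 := by ring
  rw [ge_iff_le, hL]
  calc Real.exp (-(2 * (ε ^ 2 * n + 1))) ≤ (1 - ε ^ 2) ^ n / 4 := hexp
    _ = (1 / 2) * ((1 - ε ^ 2) ^ n / 2) := by ring
    _ ≤ (1 / 2) * ∑ x, (p x * f x false + q x * f x true) := by linarith [main]

end
end

section
/- Let α ≥ 1 and C ≥ 3α + 1 be reals, let γ ∈ (0, 1/2) satisfy C·γ ≤ 1/2, let d ≥ 1 and n ≥ d be integers, and let w be a probability vector on [n] (w_j ≥ 0, Σ_j w_j = 1). Let B ⊆ [n] be a set of d indices carrying the d largest entries of w, and suppose Σ_{j∈B} w_j + √d·( Σ_{j∉B} w_j² )^{1/2} ≤ α·γ. Let X_1, …, X_n be independent {0,1}-valued random variables with P[X_j = 1] ≤ 1/2 − C·γ for every j. Then P[ Σ_{j=1}^n w_j·X_j > 1/2 − γ ] ≤ exp(−d). -/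
/-!
The mass on the top-`d` block `B` is at most `αγ` and is bounded deterministically; only the
tail `Σ_{j∉B} wⱼXⱼ` is treated probabilistically, by the exponential Markov inequality with
`λ = d / (αγ)`. Since `B` carries the largest weights, `d·wⱼ ≤ Σ_B w ≤ αγ` off `B`, so every
`λwⱼ ≤ 1` and `E exp(λwⱼXⱼ) ≤ exp(λqⱼwⱼ + λ²wⱼ²)`, while `λ² Σ_{j∉B} wⱼ² ≤ d` by the spread
hypothesis. The exponent is then at most `λ(Σ_B w + γ - Cγ) + d ≤ -2λαγ + d = -d`.
-/

open Finset

noncomputable section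

/-- Indicator of a proposition. -/
def ind (P : Prop) : ℝ := @ite ℝ P (Classical.propDecidable P) 1 0

open Real

lemma ind_le_exp {P : Prop} {s : ℝ} (h : P → 0 ≤ s) : ind P ≤ exp s := by
  by_cases hP : P
  · simpa [ind, hP] using one_le_exp (h hP)
  · simpa [ind, hP] using (exp_pos s).le

lemma exp_le_one_add_add_sq {u : ℝ} (hu0 : 0 ≤ u) (hu1 : u ≤ 1) : exp u ≤ 1 + u + u ^ 2 := by
  have := abs_le.mp (abs_exp_sub_one_sub_id_le (abs_le.mpr ⟨by linarith, hu1⟩))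
  linarith [this.2]

lemma one_sub_add_mul_exp_le_exp {q u : ℝ} (hq0 : 0 ≤ q) (hq1 : q ≤ 1) (hu0 : 0 ≤ u)
    (hu1 : u ≤ 1) : 1 - q + q * exp u ≤ exp (q * u + u ^ 2) := by
  have hexp := mul_le_mul_of_nonneg_left (exp_le_one_add_add_sq hu0 hu1) hq0
  calc 1 - q + q * exp u ≤ 1 + (q * u + u ^ 2) := by
        nlinarith [mul_nonneg (sub_nonneg.2 hq1) (sq_nonneg u)]
    _ ≤ exp (q * u + u ^ 2) := by linarith [add_one_le_exp (q * u + u ^ 2)]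

section Bernoulli

variable {ι : Type*} [Fintype ι] [DecidableEq ι]

lemma bernoulli_weight_nonneg {q : ℝ} (hq0 : 0 ≤ q) (hq1 : q ≤ 1) (b : Bool) :
    0 ≤ if b then q else 1 - q := by
  cases b <;> simp [hq0, hq1]

lemma sum_bernoulli_mul_prod (q : ι → ℝ) (f : ι → Bool → ℝ) :
    ∑ x : ι → Bool, (∏ j, if x j then q j else 1 - q j) * ∏ j, f j (x j)
      = ∏ j, ((1 - q j) * f j false + q j * f j true) := by
  have hfactor (j : ι) : (1 - q j) * f j false + q j * f j true
      = ∑ b : Bool, (if b then q j else 1 - q j) * f j b := by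
    simp [add_comm]
  simp_rw [hfactor, Fintype.prod_sum, prod_mul_distrib]

/-- Chernoff's bound: the left side is `P[E]` for independent `Xⱼ ~ Bernoulli(qⱼ)`, and only the
coordinates in `S` enter the exponential moment. -/
theorem sum_bernoulli_mul_ind_le (S : Finset ι) {q u : ι → ℝ} (hq0 : ∀ j, 0 ≤ q j)
    (hq1 : ∀ j, q j ≤ 1) (hu0 : ∀ j ∈ S, 0 ≤ u j) (hu1 : ∀ j ∈ S, u j ≤ 1) {t : ℝ}
    {E : (ι → Bool) → Prop} (hE : ∀ x, E x → t ≤ ∑ j ∈ S, u j * (if x j then 1 else 0)) :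
    ∑ x : ι → Bool, (∏ j, if x j then q j else 1 - q j) * ind (E x)
      ≤ exp (-t + ∑ j ∈ S, (q j * u j + u j ^ 2)) := by
  calc _ ≤ ∑ x : ι → Bool, (∏ j, if x j then q j else 1 - q j) *
          (exp (-t) * ∏ j, if j ∈ S then exp (u j * (if x j then 1 else 0)) else 1) := by
        gcongr with x
        · exact prod_nonneg fun j _ => bernoulli_weight_nonneg (hq0 j) (hq1 j) _
        · rw [prod_ite_mem_eq, ← exp_sum, ← exp_add]
          exact ind_le_exp fun h => by linarith [hE x h]
    _ = exp (-t) * ∏ j ∈ S, (1 - q j + q j * exp (u j)) := by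
        simp_rw [mul_left_comm _ (exp (-t)), ← mul_sum]
        rw [sum_bernoulli_mul_prod q fun j b => if j ∈ S then exp (u j * if b then 1 else 0) else 1,
          ← prod_ite_mem_eq S (fun j => 1 - q j + q j * exp (u j))]
        congr 1
        refine prod_congr rfl fun j _ => ?_
        by_cases hj : j ∈ S <;> simp [hj]
    _ ≤ exp (-t) * ∏ j ∈ S, exp (q j * u j + u j ^ 2) := by
        gcongr with j hj
        · intro j _
          exact add_nonneg (sub_nonneg.2 (hq1 j)) (mul_nonneg (hq0 j) (exp_pos _).le)
        · exact one_sub_add_mul_exp_le_exp (hq0 j) (hq1 j) (hu0 j hj) (hu1 j hj)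
    _ = _ := by rw [← exp_sum, ← exp_add]

end Bernoulli

lemma card_mul_le_sum_of_forall_le {ι : Type*} {B : Finset ι} {w : ι → ℝ}
    (hBtop : ∀ i ∈ B, ∀ j ∉ B, w j ≤ w i) {j : ι} (hj : j ∉ B) :
    B.card * w j ≤ ∑ i ∈ B, w i := by
  simpa using card_nsmul_le_sum B w (w j) fun i hi => hBtop i hi j hj

section Tail

variable {ι : Type*} [Fintype ι] [DecidableEq ι] (B : Finset ι) {w : ι → ℝ}

lemma sum_sub_sum_le_sum_compl_mul (hw0 : ∀ j, 0 ≤ w j) {y : ι → ℝ} (hy : ∀ j, y j ≤ 1) :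
    ∑ j, w j * y j - ∑ j ∈ B, w j ≤ ∑ j ∈ Bᶜ, w j * y j := by
  have hB : ∑ j ∈ B, w j * y j ≤ ∑ j ∈ B, w j :=
    sum_le_sum fun j _ => mul_le_of_le_one_right (hw0 j) (hy j)
  linarith [sum_add_sum_compl B fun j => w j * y j]

lemma sum_compl_mul_add_sq_le {q : ι → ℝ} {a c d : ℝ} (ha : 0 < a) (hd : 0 ≤ d)
    (hw0 : ∀ j, 0 ≤ w j) (hw1 : ∑ j ∈ Bᶜ, w j ≤ 1) (hc : 0 ≤ c) (hq : ∀ j, q j ≤ c)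
    (hdV : d * ∑ j ∈ Bᶜ, w j ^ 2 ≤ a ^ 2) :
    ∑ j ∈ Bᶜ, (q j * (d / a * w j) + (d / a * w j) ^ 2) ≤ d / a * c + d := by
  have hlin : ∑ j ∈ Bᶜ, q j * (d / a * w j) ≤ d / a * c :=
    calc ∑ j ∈ Bᶜ, q j * (d / a * w j) ≤ ∑ j ∈ Bᶜ, c * (d / a * w j) :=
          sum_le_sum fun j _ => mul_le_mul_of_nonneg_right (hq j) (by have := hw0 j; positivity)
      _ = d / a * c * ∑ j ∈ Bᶜ, w j := by rw [mul_sum]; exact sum_congr rfl fun _ _ => by ring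
      _ ≤ d / a * c := mul_le_of_le_one_right (by positivity) hw1
  have hquad : ∑ j ∈ Bᶜ, (d / a * w j) ^ 2 ≤ d :=
    calc ∑ j ∈ Bᶜ, (d / a * w j) ^ 2 = d / a ^ 2 * (d * ∑ j ∈ Bᶜ, w j ^ 2) := by
          rw [mul_sum, mul_sum]; exact sum_congr rfl fun _ _ => by ring
      _ ≤ d / a ^ 2 * a ^ 2 := by gcongr
      _ = d := div_mul_cancel₀ d (by positivity)
  rw [sum_add_distrib]
  linarith

end Tail

theorem spread_query_hoeffding_general
    (α C γ : ℝ) (hα : 1 ≤ α) (hC : 3 * α + 1 ≤ C)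
    (hγ0 : 0 < γ) (hCγ : C * γ ≤ 1 / 2)
    (d n : ℕ)
    (w : Fin n → ℝ) (hw0 : ∀ j, 0 ≤ w j) (hw1 : ∑ j, w j = 1)
    (B : Finset (Fin n)) (hBcard : B.card = d)
    (hBtop : ∀ i ∈ B, ∀ j ∉ B, w j ≤ w i)
    (hspread : ∑ j ∈ B, w j + Real.sqrt d * Real.sqrt (∑ j ∈ Bᶜ, w j ^ 2) ≤ α * γ)
    (q : Fin n → ℝ) (hq0 : ∀ j, 0 ≤ q j) (hq1 : ∀ j, q j ≤ 1 / 2 - C * γ) :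
    ∑ x : Fin n → Bool,
        (∏ j, if x j then q j else 1 - q j) *
          ind (1 / 2 - γ < ∑ j, w j * (if x j then (1 : ℝ) else 0))
      ≤ Real.exp (-(d : ℝ)) := by
  set a := α * γ
  set m := ∑ j ∈ B, w j
  have ha : 0 < a := by positivity
  have hm0 : 0 ≤ m := sum_nonneg fun j _ => hw0 j
  have hma : m ≤ a := by
    linarith [mul_nonneg (sqrt_nonneg (d : ℝ)) (sqrt_nonneg (∑ j ∈ Bᶜ, w j ^ 2))]
  have hdV : d * ∑ j ∈ Bᶜ, w j ^ 2 ≤ a ^ 2 := (sqrt_le_left ha.le).mp <| by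
    rw [sqrt_mul (Nat.cast_nonneg d)]; linarith
  have hCγ0 : 0 ≤ C * γ := by nlinarith
  have hgap : 2 * d ≤ d / a * (C * γ - γ - m) :=
    calc 2 * (d : ℝ) = d / a * (2 * a) := by field_simp
      _ ≤ d / a * (C * γ - γ - m) := by gcongr; nlinarith
  refine (sum_bernoulli_mul_ind_le Bᶜ (u := fun j => d / a * w j) (t := d / a * (1 / 2 - γ - m))
    hq0 (fun j => by linarith [hq1 j]) (fun j _ => by have := hw0 j; positivity)
    (fun j hj => ?_) (fun x hx => ?_)).trans (exp_le_exp.2 ?_)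
  · rw [div_mul_eq_mul_div, div_le_one ha, ← hBcard]
    exact (card_mul_le_sum_of_forall_le hBtop (mem_compl.1 hj)).trans hma
  · have htail := sum_sub_sum_le_sum_compl_mul B hw0 (y := fun j => if x j then 1 else 0)
      fun j => by split_ifs <;> norm_num
    simp_rw [mul_assoc, ← mul_sum]
    gcongr
    linarith [htail]
  · have hw1' : ∑ j ∈ Bᶜ, w j ≤ 1 := by linarith [sum_add_sum_compl B w]
    linarith [sum_compl_mul_add_sq_le B ha (Nat.cast_nonneg d) hw0 hw1' (by linarith) hq1 hdV]

/-- **Spread-query Hoeffding bound.**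
Let `α ≥ 1`, `C ≥ 3α + 1`, `γ ∈ (0, 1/2)` with `Cγ ≤ 1/2`, `d ≥ 1`, `n ≥ d`, and let
`w` be a probability vector on `[n]`. Let `B` be a set of `d` indices carrying the `d`
largest entries of `w` and assume `Σ_{j∈B} wⱼ + √d·(Σ_{j∉B} wⱼ²)^{1/2} ≤ αγ`. If
`X₁, …, Xₙ` are independent `{0,1}`-valued random variables with `P[Xⱼ = 1] ≤ 1/2 - Cγ`
for every `j` (here `q j = P[Xⱼ = 1]`), then `P[Σⱼ wⱼXⱼ > 1/2 - γ] ≤ exp(-d)`. -/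
theorem spread_query_hoeffding
    (α C γ : ℝ) (hα : 1 ≤ α) (hC : 3 * α + 1 ≤ C)
    (hγ0 : 0 < γ) (hγ1 : γ < 1 / 2) (hCγ : C * γ ≤ 1 / 2)
    (d n : ℕ) (hd : 1 ≤ d) (hdn : d ≤ n)
    (w : Fin n → ℝ) (hw0 : ∀ j, 0 ≤ w j) (hw1 : ∑ j, w j = 1)
    (B : Finset (Fin n)) (hBcard : B.card = d)
    (hBtop : ∀ i ∈ B, ∀ j ∉ B, w j ≤ w i)
    (hspread : ∑ j ∈ B, w j + Real.sqrt d * Real.sqrt (∑ j ∈ Bᶜ, w j ^ 2) ≤ α * γ)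
    (q : Fin n → ℝ) (hq0 : ∀ j, 0 ≤ q j) (hq1 : ∀ j, q j ≤ 1 / 2 - C * γ) :
    ∑ x : Fin n → Bool,
        (∏ j, if x j then q j else 1 - q j) *
          ind (1 / 2 - γ < ∑ j, w j * (if x j then (1 : ℝ) else 0))
      ≤ Real.exp (-(d : ℝ)) :=
  spread_query_hoeffding_general α C γ hα hC hγ0 hCγ d n w hw0 hw1 B hBcard hBtop hspread q hq0 hq1

end
end

section
/- There exist universal constants α > 0 and β > 0 such that for every integer n ≥ 1, every integer d ≥ 1, every real γ > 0, every probability vector w on [n] (w_j ≥ 0, Σ_j w_j = 1) satisfying F'(w, √d) ≥ α·γ, and every c* ∈ {±1}^n, it holds that P_{r ∼ Unif{±1}^n}[ Σ_{j=1}^n w_j·1[r_j ≠ c*_j] < 1/2 − γ ] ≥ β^{−1}·exp(−β·d). -/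
/-!
The error of `r` against `c*` is `1/2 - ⟨w, ε⟩/2` for the uniform sign vector `ε_j = c*_j r_j`,
so it suffices to show `P(⟨w, ε⟩ > 2γ) ≥ exp(-O(d))`. Let `H` be the `d` heaviest coordinates.
With probability `2^(-d)` all signs on `H` are `+1`, and independently the remaining sum is
nonnegative with probability `1/2`; this suffices when `∑_H w ≥ 4γ`. Otherwise `F'(w, √d) ≥ 16γ`
puts `ℓ²`-mass at least `144γ²/d` outside `H`, where every weight is below `c = 4γ/d`. That mass
splits into `2d` blocks of `ℓ²`-mass in `[2c², 4c²]`; by Paley–Zygmund and `E X⁴ ≤ 3 (E X²)²`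
each block sum is at least `c` with probability `1/24`, independently, so the sum outside `H`
is at least `8γ` with probability `24^(-2d)/2`.
-/

open Finset

noncomputable section

/-- Given a permutation `σ` sorting the entries of `w` in decreasing order, this is
`F'(w, t) = Σ_{i=1}^{⌊t²⌋} w_(i) + t·(Σ_{i=⌊t²⌋+1}^{n} w_(i)²)^{1/2}`, where `w_(i)`
denotes the `i`-th largest entry of `w`. -/
def Fprime {n : ℕ} (w : Fin n → ℝ) (t : ℝ) (σ : Equiv.Perm (Fin n)) : ℝ :=
  ∑ i ∈ univ.filter (fun i : Fin n => (i : ℕ) < ⌊t ^ 2⌋₊), w (σ i) +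
    t * Real.sqrt (∑ i ∈ univ.filter (fun i : Fin n => ⌊t ^ 2⌋₊ ≤ (i : ℕ)), w (σ i) ^ 2)

open scoped BigOperators

section Indicator

variable {P Q : Prop}

lemma ind_of_pos (h : P) : ind P = 1 := by simp [ind, h]

lemma ind_of_neg (h : ¬P) : ind P = 0 := by simp [ind, h]

lemma ind_nonneg (P : Prop) : 0 ≤ ind P := by
  by_cases h : P <;> simp [ind, h]

lemma ind_sq (P : Prop) : ind P ^ 2 = ind P := by
  by_cases h : P <;> simp [ind, h]

lemma ind_and (P Q : Prop) : ind (P ∧ Q) = ind P * ind Q := by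
  by_cases hP : P <;> by_cases hQ : Q <;> simp [ind, hP, hQ]

lemma ind_mono (h : P → Q) : ind P ≤ ind Q := by
  by_cases hP : P
  · rw [ind_of_pos hP, ind_of_pos (h hP)]
  · rw [ind_of_neg hP]; exact ind_nonneg Q

lemma ind_or_le (P Q : Prop) : ind (P ∨ Q) ≤ ind P + ind Q := by
  by_cases hP : P <;> by_cases hQ : Q <;> simp [ind, hP, hQ]

end Indicator

section UniformProbability

variable {α : Type*} [Fintype α] {P Q : α → Prop}

def unifProb (P : α → Prop) : ℝ := 𝔼 x, ind (P x)

lemma unifProb_eq_card_div [DecidablePred P] :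
    unifProb P = #{x | P x} / Fintype.card α := by
  rw [unifProb, Fintype.expect_eq_sum_div_card, ← sum_boole]
  congr 2 with x
  by_cases h : P x <;> simp [ind, h]

lemma unifProb_nonneg (P : α → Prop) : 0 ≤ unifProb P :=
  expect_nonneg fun _ _ ↦ ind_nonneg _

lemma unifProb_mono (h : ∀ x, P x → Q x) : unifProb P ≤ unifProb Q :=
  expect_le_expect fun x _ ↦ ind_mono (h x)

lemma unifProb_or_le : unifProb (fun x ↦ P x ∨ Q x) ≤ unifProb P + unifProb Q := by
  rw [unifProb, unifProb, unifProb, ← expect_add_distrib]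
  exact expect_le_expect fun x _ ↦ ind_or_le _ _

lemma unifProb_of_forall [Nonempty α] (h : ∀ x, P x) : unifProb P = 1 := by
  simp [unifProb, ind_of_pos (h _)]

lemma unifProb_comp_equiv {β : Type*} [Fintype β] (e : α ≃ β) (P : β → Prop) :
    unifProb (fun x ↦ P (e x)) = unifProb P :=
  Fintype.expect_equiv e _ _ fun _ ↦ rfl

theorem paley_zygmund [Nonempty α] {Y : α → ℝ} (hY : 0 ≤ 𝔼 x, Y x) {θ : ℝ} (hθ₀ : 0 ≤ θ)
    (hθ₁ : θ ≤ 1) :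
    ((1 - θ) * 𝔼 x, Y x) ^ 2 ≤ (𝔼 x, Y x ^ 2) * unifProb (fun x ↦ θ * 𝔼 y, Y y < Y x) := by
  set E := 𝔼 y, Y y
  have hsplit : E ≤ θ * E + 𝔼 x, Y x * ind (θ * E < Y x) := by
    rw [← Fintype.expect_const (ι := α) (θ * E), ← expect_add_distrib]
    refine expect_le_expect fun x _ ↦ ?_
    by_cases h : θ * E < Y x
    · simp [ind_of_pos h, mul_nonneg hθ₀ hY]
    · simp [ind_of_neg h]; linarith
  calc ((1 - θ) * E) ^ 2 ≤ (𝔼 x, Y x * ind (θ * E < Y x)) ^ 2 :=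
        pow_le_pow_left₀ (mul_nonneg (by linarith) hY) (by linarith) 2
    _ ≤ (𝔼 x, Y x ^ 2) * 𝔼 x, ind (θ * E < Y x) ^ 2 := expect_mul_sq_le_sq_mul_sq _ _ _
    _ = _ := by simp only [ind_sq, unifProb]

end UniformProbability

section BoolCube

variable {ι : Type*}

def spin (b : Bool) : ℝ := if b then 1 else -1

lemma spin_not (b : Bool) : spin (!b) = -spin b := by cases b <;> simp [spin]

lemma spin_sq (b : Bool) : spin b ^ 2 = 1 := by cases b <;> simp [spin]

def signedSum (v : ι → ℝ) (B : Finset ι) (s : ι → Bool) : ℝ := ∑ i ∈ B, v i * spin (s i)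

variable {v : ι → ℝ} {B : Finset ι}

lemma signedSum_insert [DecidableEq ι] {a : ι} (ha : a ∉ B) (s : ι → Bool) :
    signedSum v (insert a B) s = v a * spin (s a) + signedSum v B s :=
  sum_insert ha

lemma signedSum_add_compl [Fintype ι] [DecidableEq ι] (v : ι → ℝ) (B : Finset ι) (s : ι → Bool) :
    signedSum v B s + signedSum v Bᶜ s = signedSum v univ s :=
  sum_add_sum_compl B _

lemma signedSum_of_forall_true {s : ι → Bool} (hs : ∀ i ∈ B, s i = true) :
    signedSum v B s = ∑ i ∈ B, v i :=
  sum_congr rfl fun i hi ↦ by simp [hs i hi, spin]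

lemma signedSum_not (v : ι → ℝ) (B : Finset ι) (s : ι → Bool) :
    signedSum v B (fun i ↦ !s i) = -signedSum v B s := by
  simp [signedSum, spin_not, ← sum_neg_distrib]

lemma signedSum_sdiff_add [DecidableEq ι] {S : Finset ι} (h : B ⊆ S) (s : ι → Bool) :
    signedSum v (S \ B) s + signedSum v B s = signedSum v S s :=
  sum_sdiff h

lemma dependsOn_signedSum {β : Type*} (v : ι → ℝ) (B : Finset ι) (R : ℝ → β) :
    DependsOn (fun s ↦ R (signedSum v B s)) B :=
  fun _ _ h ↦ congrArg R <| sum_congr rfl fun i hi ↦ by rw [h i hi]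

lemma dependsOn_forall_eq_true (H : Finset ι) :
    DependsOn (fun s : ι → Bool ↦ ∀ i ∈ H, s i = true) H :=
  fun _ _ h ↦ propext <| forall₂_congr fun i hi ↦ by rw [h i hi]

variable [Fintype ι] [DecidableEq ι]

lemma expect_comp_not (f : (ι → Bool) → ℝ) : 𝔼 s : ι → Bool, f (fun i ↦ !s i) = 𝔼 s, f s :=
  Fintype.expect_equiv (Equiv.piCongrRight fun _ ↦ Equiv.boolNot) _ _ fun _ ↦ rfl

lemma expect_spin (a : ι) : 𝔼 s : ι → Bool, spin (s a) = 0 := by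
  have h := expect_comp_not fun s ↦ spin (s a)
  simp only [spin_not, expect_neg_distrib] at h
  linarith

lemma unifProb_neg_signedSum (R : ℝ → Prop) :
    unifProb (fun s ↦ R (-signedSum v B s)) = unifProb (fun s ↦ R (signedSum v B s)) := by
  rw [unifProb, ← expect_comp_not]
  simp only [signedSum_not, neg_neg, unifProb]

theorem expect_mul_of_dependsOn {f g : (ι → Bool) → ℝ} {S : Set ι}
    (hf : DependsOn f S) (hg : DependsOn g Sᶜ) :
    𝔼 s, f s * g s = (𝔼 s, f s) * 𝔼 s, g s := by
  classical
  let merge (s t : ι → Bool) : ι → Bool := fun i ↦ if i ∈ S then s i else t i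
  let e : (ι → Bool) × (ι → Bool) ≃ (ι → Bool) × (ι → Bool) :=
    Function.Involutive.toPerm (fun p ↦ (merge p.1 p.2, merge p.2 p.1)) fun p ↦ by
      ext i <;> by_cases hi : i ∈ S <;> simp [merge, hi]
  have hfg (p : (ι → Bool) × (ι → Bool)) : f p.1 * g p.2 = f (e p).1 * g (e p).1 := by
    rw [show (e p).1 = merge p.1 p.2 from rfl]
    congr 1
    · exact hf fun i hi ↦ by simp [merge, hi]
    · exact hg fun i hi ↦ by simp [merge, Set.notMem_of_mem_compl hi]
  calc 𝔼 s, f s * g s = 𝔼 p : (ι → Bool) × (ι → Bool), f p.1 * g p.1 := by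
        rw [← univ_product_univ, expect_product]; simp
    _ = 𝔼 p : (ι → Bool) × (ι → Bool), f p.1 * g p.2 :=
        (Fintype.expect_equiv e _ _ hfg).symm
    _ = (𝔼 s, f s) * 𝔼 s, g s := by
        rw [← univ_product_univ, expect_product, Fintype.expect_mul_expect]

lemma unifProb_and_of_dependsOn {P Q : (ι → Bool) → Prop} {S : Set ι}
    (hP : DependsOn P S) (hQ : DependsOn Q Sᶜ) :
    unifProb (fun s ↦ P s ∧ Q s) = unifProb P * unifProb Q := by
  simp only [unifProb, ind_and]
  exact expect_mul_of_dependsOn (fun s t h ↦ by rw [hP h]) (fun s t h ↦ by rw [hQ h])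

end BoolCube

lemma exists_subset_le_sum_le_two_mul {ι : Type*} [DecidableEq ι] {f : ι → ℝ} {a : ℝ}
    (ha : 0 ≤ a) (S : Finset ι) (hf : ∀ i ∈ S, f i ≤ a) (hS : a ≤ ∑ i ∈ S, f i) :
    ∃ B ⊆ S, a ≤ ∑ i ∈ B, f i ∧ ∑ i ∈ B, f i ≤ 2 * a := by
  induction S using Finset.induction_on with
  | empty => exact ⟨∅, subset_refl _, hS, by simp [ha]⟩
  | insert x S hx ih =>
    by_cases h : a ≤ ∑ i ∈ S, f i
    · obtain ⟨B, hBS, hB⟩ := ih (fun i hi ↦ hf i (mem_insert_of_mem hi)) h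
      exact ⟨B, hBS.trans (subset_insert x S), hB⟩
    · refine ⟨insert x S, subset_refl _, hS, ?_⟩
      rw [sum_insert hx]
      linarith [hf x (mem_insert_self x S)]

section Rademacher

variable {ι : Type*} [Fintype ι] [DecidableEq ι] {v : ι → ℝ} {B : Finset ι}

lemma expect_spin_mul_signedSum_pow {a : ι} (ha : a ∉ B) (k : ℕ) :
    𝔼 s, spin (s a) * signedSum v B s ^ k = 0 := by
  rw [expect_mul_of_dependsOn (S := {a}) (fun s t h ↦ by rw [h a rfl])
    ((dependsOn_signedSum v B (· ^ k)).mono (by simpa using ha)), expect_spin, zero_mul]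

theorem expect_signedSum_sq (v : ι → ℝ) (B : Finset ι) :
    𝔼 s, signedSum v B s ^ 2 = ∑ i ∈ B, v i ^ 2 := by
  induction B using Finset.induction_on with
  | empty => simp [signedSum]
  | insert a B ha ih =>
    have hexp (s : ι → Bool) : signedSum v (insert a B) s ^ 2 =
        v a ^ 2 + 2 * v a * (spin (s a) * signedSum v B s ^ 1) + signedSum v B s ^ 2 := by
      rw [signedSum_insert ha]
      linear_combination v a ^ 2 * spin_sq (s a)
    simp only [hexp, expect_add_distrib, ← mul_expect, expect_spin_mul_signedSum_pow ha, ih,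
      Fintype.expect_const, sum_insert ha]
    ring

theorem expect_signedSum_pow_four_le (v : ι → ℝ) (B : Finset ι) :
    𝔼 s, signedSum v B s ^ 4 ≤ 3 * (∑ i ∈ B, v i ^ 2) ^ 2 := by
  induction B using Finset.induction_on with
  | empty => simp [signedSum]
  | insert a B ha ih =>
    have hexp (s : ι → Bool) : signedSum v (insert a B) s ^ 4 =
        v a ^ 4 + 4 * v a ^ 3 * (spin (s a) * signedSum v B s ^ 1)
          + 6 * v a ^ 2 * signedSum v B s ^ 2 + 4 * v a * (spin (s a) * signedSum v B s ^ 3)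
          + signedSum v B s ^ 4 := by
      rw [signedSum_insert ha]
      linear_combination (v a ^ 4 * (spin (s a) ^ 2 + 1)
        + 4 * v a ^ 3 * signedSum v B s * spin (s a) + 6 * v a ^ 2 * signedSum v B s ^ 2)
          * spin_sq (s a)
    simp only [hexp, expect_add_distrib, ← mul_expect, expect_spin_mul_signedSum_pow ha,
      expect_signedSum_sq, Fintype.expect_const, sum_insert ha]
    nlinarith [pow_nonneg (sq_nonneg (v a)) 2]

theorem half_le_unifProb_signedSum_nonneg : 1 / 2 ≤ unifProb (fun s ↦ 0 ≤ signedSum v B s) := by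
  have h : 1 ≤ unifProb (fun s ↦ 0 ≤ signedSum v B s) + unifProb (fun s ↦ 0 ≤ -signedSum v B s) :=
    (unifProb_of_forall fun s ↦ (le_total 0 _).imp_right neg_nonneg.mpr).ge.trans unifProb_or_le
  rw [unifProb_neg_signedSum (0 ≤ ·)] at h
  linarith

theorem inv_24_le_unifProb_le_signedSum {c : ℝ} (hc : 0 < c)
    (hB : 2 * c ^ 2 ≤ ∑ i ∈ B, v i ^ 2) : 1 / 24 ≤ unifProb (fun s ↦ c ≤ signedSum v B s) := by
  have hV : 0 < ∑ i ∈ B, v i ^ 2 := lt_of_lt_of_le (by positivity) hB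
  have hPZ := paley_zygmund (Y := fun s ↦ signedSum v B s ^ 2)
    (by rw [expect_signedSum_sq]; positivity) (θ := 1 / 2) (by norm_num) (by norm_num)
  simp only [expect_signedSum_sq, ← pow_mul] at hPZ
  have hlarge : 1 / 12 ≤ unifProb (fun s ↦ 1 / 2 * ∑ i ∈ B, v i ^ 2 < signedSum v B s ^ 2) := by
    have := hPZ.trans (mul_le_mul_of_nonneg_right (expect_signedSum_pow_four_le v B)
      (unifProb_nonneg _))
    nlinarith [pow_pos hV 2]
  have hsplit : unifProb (fun s ↦ 1 / 2 * ∑ i ∈ B, v i ^ 2 < signedSum v B s ^ 2) ≤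
      unifProb (fun s ↦ c ≤ signedSum v B s) + unifProb (fun s ↦ c ≤ -signedSum v B s) := by
    refine (unifProb_mono fun s hs ↦ ?_).trans unifProb_or_le
    have : |c| < |signedSum v B s| := sq_lt_sq.mp (by linarith)
    rw [abs_of_pos hc] at this
    exact (lt_abs.mp this).imp le_of_lt le_of_lt
  rw [unifProb_neg_signedSum (c ≤ ·)] at hsplit
  linarith

theorem unifProb_mul_le_signedSum {c : ℝ} (hc : 0 < c) (m : ℕ) (S : Finset ι)
    (hv : ∀ i ∈ S, v i ^ 2 ≤ 2 * c ^ 2) (hS : 4 * m * c ^ 2 ≤ ∑ i ∈ S, v i ^ 2) :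
    2⁻¹ * 24⁻¹ ^ m ≤ unifProb (fun s ↦ m * c ≤ signedSum v S s) := by
  induction m generalizing S with
  | zero => simpa using half_le_unifProb_signedSum_nonneg (v := v) (B := S)
  | succ m ih =>
    push_cast at hS
    obtain ⟨B, hBS, hB₁, hB₂⟩ :=
      exists_subset_le_sum_le_two_mul (by positivity) S hv (by nlinarith)
    have hrest : 4 * m * c ^ 2 ≤ ∑ i ∈ S \ B, v i ^ 2 := by
      rw [sum_sdiff_eq_sub hBS]; linarith
    have hindep := unifProb_and_of_dependsOn (dependsOn_signedSum v B (c ≤ ·))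
      ((dependsOn_signedSum v (S \ B) ((m : ℝ) * c ≤ ·)).mono (by simp))
    calc 2⁻¹ * 24⁻¹ ^ (m + 1) = 24⁻¹ * (2⁻¹ * 24⁻¹ ^ m) := by ring
      _ ≤ unifProb (fun s ↦ c ≤ signedSum v B s) *
            unifProb (fun s ↦ m * c ≤ signedSum v (S \ B) s) :=
          mul_le_mul (by simpa using inv_24_le_unifProb_le_signedSum hc hB₁)
            (ih _ (fun i hi ↦ hv i (sdiff_subset hi)) hrest) (by positivity) (unifProb_nonneg _)
      _ = unifProb (fun s ↦ c ≤ signedSum v B s ∧ m * c ≤ signedSum v (S \ B) s) := hindep.symm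
      _ ≤ unifProb (fun s ↦ ((m + 1 : ℕ) : ℝ) * c ≤ signedSum v S s) :=
          unifProb_mono fun s ⟨h₁, h₂⟩ ↦ by
            rw [← signedSum_sdiff_add hBS]; push_cast; linarith

end Rademacher

section Concentrated

variable {ι : Type*} [Fintype ι] [DecidableEq ι] {w : ι → ℝ} {H : Finset ι}

lemma unifProb_eq_true (a : ι) : unifProb (fun s : ι → Bool ↦ s a = true) = 2⁻¹ := by
  have h (b : Bool) : ind (b = true) = (1 + spin b) / 2 := by cases b <;> norm_num [ind, spin]
  simp only [unifProb, h, ← expect_div, expect_add_distrib, expect_spin, Fintype.expect_const]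
  norm_num

lemma unifProb_forall_eq_true (H : Finset ι) :
    unifProb (fun s : ι → Bool ↦ ∀ i ∈ H, s i = true) = 2⁻¹ ^ #H := by
  induction H using Finset.induction_on with
  | empty => simp [unifProb_of_forall]
  | insert a H ha ih =>
    simp only [forall_mem_insert]
    rw [unifProb_and_of_dependsOn (S := {a}) (fun s t h ↦ by rw [h a rfl])
      ((dependsOn_forall_eq_true H).mono (by simpa using ha)), unifProb_eq_true, ih,
      card_insert_of_notMem ha, pow_succ']

theorem pow_mul_unifProb_le_unifProb_add_le (u : ℝ) :
    2⁻¹ ^ #H * unifProb (fun s ↦ u ≤ signedSum w Hᶜ s) ≤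
      unifProb (fun s ↦ ∑ i ∈ H, w i + u ≤ signedSum w univ s) := by
  rw [← unifProb_forall_eq_true H, ← unifProb_and_of_dependsOn (dependsOn_forall_eq_true H)
    (by simpa using dependsOn_signedSum w Hᶜ (u ≤ ·))]
  refine unifProb_mono fun s ⟨hH, hu⟩ ↦ ?_
  rw [← signedSum_add_compl w H s, signedSum_of_forall_true hH]
  linarith

theorem inv_two_pow_succ_le_unifProb_sum_le :
    2⁻¹ ^ (#H + 1) ≤ unifProb (fun s ↦ ∑ i ∈ H, w i ≤ signedSum w univ s) := by
  calc (2⁻¹ : ℝ) ^ (#H + 1) ≤ 2⁻¹ ^ #H * unifProb (fun s ↦ 0 ≤ signedSum w Hᶜ s) := by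
        rw [pow_succ]; gcongr; simpa using half_le_unifProb_signedSum_nonneg
    _ ≤ _ := by simpa using pow_mul_unifProb_le_unifProb_add_le (w := w) (H := H) 0

theorem unifProb_le_signedSum_of_spread {c : ℝ} (hc : 0 < c) (m : ℕ) (hw : ∀ i ∈ H, 0 ≤ w i)
    (hv : ∀ i ∉ H, w i ^ 2 ≤ 2 * c ^ 2) (hT : 4 * m * c ^ 2 ≤ ∑ i ∈ Hᶜ, w i ^ 2) :
    2⁻¹ ^ #H * (2⁻¹ * 24⁻¹ ^ m) ≤ unifProb (fun s ↦ m * c ≤ signedSum w univ s) := by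
  calc (2⁻¹ : ℝ) ^ #H * (2⁻¹ * 24⁻¹ ^ m)
      ≤ 2⁻¹ ^ #H * unifProb (fun s ↦ m * c ≤ signedSum w Hᶜ s) := by
        gcongr
        exact unifProb_mul_le_signedSum hc m Hᶜ (fun i hi ↦ hv i (mem_compl.mp hi)) hT
    _ ≤ unifProb (fun s ↦ ∑ i ∈ H, w i + m * c ≤ signedSum w univ s) :=
        pow_mul_unifProb_le_unifProb_add_le _
    _ ≤ _ := unifProb_mono fun s hs ↦ by linarith [sum_nonneg hw]

theorem inv_two_mul_pow_le_unifProb_of_concentrated (hw : ∀ i, 0 ≤ w i) {d : ℕ} (hH : #H ≤ d)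
    (hdom : ∀ i ∉ H, d * w i ≤ ∑ j ∈ H, w j) {γ : ℝ} (hγ : 0 < γ)
    (hF : 16 * γ ≤ ∑ j ∈ H, w j + √d * √(∑ j ∈ Hᶜ, w j ^ 2)) :
    2⁻¹ * 1152⁻¹ ^ d ≤ unifProb (fun s ↦ 2 * γ < signedSum w univ s) := by
  have hpow : (2⁻¹ : ℝ) ^ d ≤ 2⁻¹ ^ #H := pow_le_pow_of_le_one (by norm_num) (by norm_num) hH
  rcases le_or_gt (4 * γ) (∑ j ∈ H, w j) with hhead | hhead
  · calc 2⁻¹ * 1152⁻¹ ^ d ≤ (2⁻¹ : ℝ) ^ (#H + 1) := by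
          rw [pow_succ, mul_comm]
          gcongr
          exact (pow_le_pow_left₀ (by norm_num) (by norm_num : (1152 : ℝ)⁻¹ ≤ 2⁻¹) d).trans hpow
      _ ≤ _ := inv_two_pow_succ_le_unifProb_sum_le.trans (unifProb_mono fun s hs ↦ by linarith)
  · have htail : 12 * γ ≤ √d * √(∑ j ∈ Hᶜ, w j ^ 2) := by linarith
    have hd : (0 : ℝ) < d := by
      refine (Nat.cast_nonneg (α := ℝ) d).lt_of_ne fun hd ↦ ?_
      rw [← hd, Real.sqrt_zero, zero_mul] at htail
      linarith
    have hT : 144 * γ ^ 2 ≤ d * ∑ j ∈ Hᶜ, w j ^ 2 := by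
      rw [← Real.sq_sqrt hd.le, ← Real.sq_sqrt (sum_nonneg fun j _ ↦ sq_nonneg (w j))]
      nlinarith
    have hv (i : ι) (hi : i ∉ H) : w i ^ 2 ≤ 2 * (4 * γ / d) ^ 2 := by
      have : w i ≤ 4 * γ / d := by rw [le_div_iff₀ hd]; linarith [hdom i hi]
      nlinarith [hw i]
    have hmass : 4 * ((2 * d : ℕ) : ℝ) * (4 * γ / d) ^ 2 ≤ ∑ j ∈ Hᶜ, w j ^ 2 := by
      rw [show 4 * ((2 * d : ℕ) : ℝ) * (4 * γ / d) ^ 2 = 128 * γ ^ 2 / d by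
        push_cast; field_simp; ring, div_le_iff₀ hd]
      nlinarith
    calc 2⁻¹ * 1152⁻¹ ^ d = (2⁻¹ : ℝ) ^ d * (2⁻¹ * 24⁻¹ ^ (2 * d)) := by
          rw [pow_mul, mul_left_comm, ← mul_pow]; norm_num
      _ ≤ 2⁻¹ ^ #H * (2⁻¹ * 24⁻¹ ^ (2 * d)) := by gcongr
      _ ≤ _ := (unifProb_le_signedSum_of_spread (by positivity) _ (fun i _ ↦ hw i) hv hmass).trans
          (unifProb_mono fun s hs ↦ by
            rw [show ((2 * d : ℕ) : ℝ) * (4 * γ / d) = 8 * γ by push_cast; field_simp; ring] at hs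
            linarith)

end Concentrated

section Query

variable {ι : Type*} [Fintype ι] {w : ι → ℝ}

lemma ind_ne_eq (a b : Bool) : ind (a ≠ b) = (1 - spin (a == b)) / 2 := by
  cases a <;> cases b <;> norm_num [ind, spin]

lemma sum_mul_ind_ne_eq (hw : ∑ j, w j = 1) (r c : ι → Bool) :
    ∑ j, w j * ind (r j ≠ c j) = (1 - signedSum w univ (fun j ↦ r j == c j)) / 2 := by
  rw [eq_div_iff two_ne_zero, sum_mul, ← hw, signedSum, ← sum_sub_distrib]
  exact sum_congr rfl fun j _ ↦ by rw [ind_ne_eq]; ring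

theorem card_filter_sum_mul_ind_ne_lt_div [DecidableEq ι] (hw : ∑ j, w j = 1) (c : ι → Bool)
    (γ : ℝ) :
    (#{r : ι → Bool | ∑ j, w j * ind (r j ≠ c j) < 1 / 2 - γ} : ℝ) / 2 ^ Fintype.card ι =
      unifProb (fun s ↦ 2 * γ < signedSum w univ s) := by
  let xnor : (ι → Bool) ≃ (ι → Bool) :=
    Function.Involutive.toPerm (fun r j ↦ r j == c j) fun r ↦ by
      funext j; dsimp only; cases r j <;> cases c j <;> rfl
  rw [← unifProb_comp_equiv xnor]
  have hcard : (2 : ℝ) ^ Fintype.card ι = Fintype.card (ι → Bool) := by simp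
  rw [hcard, ← unifProb_eq_card_div]
  congr! 2 with r
  rw [sum_mul_ind_ne_eq hw, show xnor r = fun j ↦ r j == c j from rfl]
  constructor <;> intro h <;> linarith

end Query

section SortedWeights

variable {n : ℕ}

/-- The positions of the `d` largest entries of `w` when `σ` sorts `w` decreasingly. -/
def topIndices (σ : Equiv.Perm (Fin n)) (d : ℕ) : Finset (Fin n) := {j | (σ.symm j : ℕ) < d}

lemma card_topIndices (σ : Equiv.Perm (Fin n)) (d : ℕ) : #(topIndices σ d) = min n d := by
  rw [← Fin.card_filter_val_lt]
  exact card_equiv σ.symm (by simp [topIndices])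

lemma Fprime_sqrt_natCast_eq (w : Fin n → ℝ) (σ : Equiv.Perm (Fin n)) (d : ℕ) :
    Fprime w √d σ = ∑ j ∈ topIndices σ d, w j + √d * √(∑ j ∈ (topIndices σ d)ᶜ, w j ^ 2) := by
  rw [Fprime, Real.sq_sqrt d.cast_nonneg, Nat.floor_natCast]
  congr 1
  · exact sum_equiv σ (by simp [topIndices]) fun _ _ ↦ rfl
  · congr 2
    exact sum_equiv σ (by simp [topIndices]) fun _ _ ↦ rfl

lemma natCast_mul_le_sum_topIndices {w : Fin n → ℝ} {σ : Equiv.Perm (Fin n)}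
    (hsort : ∀ i j : Fin n, i ≤ j → w (σ j) ≤ w (σ i)) {d : ℕ} {j : Fin n}
    (hj : j ∉ topIndices σ d) : d * w j ≤ ∑ i ∈ topIndices σ d, w i := by
  have hjd : d ≤ (σ.symm j : ℕ) := by simpa [topIndices] using hj
  have hcard : #(topIndices σ d) = d := by
    have := (σ.symm j).isLt
    rw [card_topIndices]
    omega
  calc (d : ℝ) * w j = ∑ _i ∈ topIndices σ d, w j := by simp [hcard]
    _ ≤ ∑ i ∈ topIndices σ d, w i := sum_le_sum fun i hi ↦ by
        have hid : (σ.symm i : ℕ) < d := by simpa [topIndices] using hi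
        simpa using hsort (σ.symm i) (σ.symm j) (Fin.le_def.mpr (by omega))

end SortedWeights

lemma inv_mul_exp_neg_le (d : ℕ) : (16 : ℝ)⁻¹ * Real.exp (-(16 * d)) ≤ 2⁻¹ * 1152⁻¹ ^ d := by
  have he : (1152 : ℝ) ≤ Real.exp 16 := calc
    (1152 : ℝ) ≤ 2 ^ 16 := by norm_num
    _ ≤ Real.exp 1 ^ 16 := by gcongr; linarith [Real.add_one_le_exp 1]
    _ = Real.exp 16 := by rw [← Real.exp_nat_mul]; norm_num
  rw [show -(16 * (d : ℝ)) = d * -16 by ring, Real.exp_nat_mul, Real.exp_neg]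
  gcongr
  norm_num

/-- **Concentrated queries are answered by a uniformly random hypothesis.**
There are universal constants `α, β > 0` such that for all `n, d ≥ 1`, every `γ > 0`,
every probability vector `w` on `[n]` (with `σ` a permutation arranging its entries in
decreasing order) satisfying `F'(w, √d) ≥ αγ`, and every `c* ∈ {±1}ⁿ`, a uniformly
random `r ∈ {±1}ⁿ` satisfies `Σⱼ wⱼ·1[rⱼ ≠ c*ⱼ] < 1/2 - γ` with probability at least
`β⁻¹·exp(-βd)`. -/
theorem concentrated_query_random_hypothesis :
    ∃ α β : ℝ, 0 < α ∧ 0 < β ∧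
      ∀ n d : ℕ, 1 ≤ n → 1 ≤ d →
      ∀ γ : ℝ, 0 < γ →
      ∀ w : Fin n → ℝ, (∀ j, 0 ≤ w j) → ∑ j, w j = 1 →
      ∀ σ : Equiv.Perm (Fin n), (∀ i j : Fin n, i ≤ j → w (σ j) ≤ w (σ i)) →
        α * γ ≤ Fprime w (Real.sqrt d) σ →
      ∀ cstar : Fin n → Bool,
        (((univ.filter fun r : Fin n → Bool =>
              ∑ j, w j * ind (r j ≠ cstar j) < 1 / 2 - γ).card : ℝ) / 2 ^ n)
          ≥ β⁻¹ * Real.exp (-(β * d)) := by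
  refine ⟨16, 16, by norm_num, by norm_num, fun n d _ _ γ hγ w hw0 hw1 σ hsort hF cstar ↦ ?_⟩
  rw [Fprime_sqrt_natCast_eq] at hF
  have hcount := card_filter_sum_mul_ind_ne_lt_div hw1 cstar γ
  rw [Fintype.card_fin] at hcount
  rw [ge_iff_le, hcount]
  exact (inv_mul_exp_neg_le d).trans <| inv_two_mul_pow_le_unifProb_of_concentrated hw0
    ((card_topIndices σ d).trans_le (min_le_right n d))
    (fun j hj ↦ natCast_mul_le_sum_topIndices hsort hj) hγ hF
end
end

section
/- Let m ≥ 1 and K ≥ 0 be integers, γ ∈ (0, 1/2] a real, and w = (1/2)·ln((1/2 + γ/4)/(1/2 − γ/4)). Let (Z_{i,j})_{0 ≤ i ≤ K, 1 ≤ j ≤ m} be positive reals such that for every i < K and every j, Z_{i+1,j}/Z_{i,j} ∈ {e^w, e^{−w}}. Define probability distributions D_i on [m] by D_i(j) = Z_{i,j} / Σ_{k=1}^m Z_{i,k}. Then for every real R ≥ 0 and all indices i, i' ∈ {0, …, K} with |i − i'| ≤ R, the max-divergences satisfy D_∞(D_i, D_{i'}) ≤ 2γR and D_∞(D_{i'},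 D_i) ≤ 2γR; in particular, D_i and D_{i'} are (2γR, 0)-indistinguishable. -/
open Finset

noncomputable section

/-- The max-divergence `D_∞(D, D') = ln(max_x D(x)/D'(x))` between two distributions on
`Fin m`. -/
def maxDiv {m : ℕ} (D D' : Fin m → ℝ) : ℝ :=
  Real.log (sSup (Set.range fun j => D j / D' j))

/-- Two distributions on a finite set are `(ε, δ)`-indistinguishable if for every event
`E`, `P_D[E] ≤ e^ε P_{D'}[E] + δ` and `P_{D'}[E] ≤ e^ε P_D[E] + δ`. -/
def Indist {α : Type*} [Fintype α] (ε δ : ℝ) (D D' : α → ℝ) : Prop :=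
  ∀ E : Finset α,
    (∑ a ∈ E, D a ≤ Real.exp ε * ∑ a ∈ E, D' a + δ) ∧
    (∑ a ∈ E, D' a ≤ Real.exp ε * ∑ a ∈ E, D a + δ)

/-- **Max-divergence bound for consecutive AdaBoost distributions.**
Let `m ≥ 1`, `K ≥ 0`, `γ ∈ (0, 1/2]`, and `η = (1/2)·ln((1/2 + γ/4)/(1/2 - γ/4))`.
Let positive weights `Z i j` (`0 ≤ i ≤ K`, `j ∈ [m]`) satisfy
`Z (i+1) j / Z i j ∈ {e^η, e^{-η}}`, and let `D_i(j) = Z i j / Σ_k Z i k`. Then for all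
`R ≥ 0` and `i, i' ≤ K` with `|i - i'| ≤ R`, both max-divergences between `D_i` and
`D_{i'}` are at most `2γR`; in particular `D_i, D_{i'}` are `(2γR, 0)`-indistinguishable. -/
theorem adaboost_max_divergence
    (m K : ℕ) (hm : 1 ≤ m)
    (γ : ℝ) (hγ0 : 0 < γ) (hγ1 : γ ≤ 1 / 2)
    (η : ℝ) (hη : η = (1 / 2) * Real.log ((1 / 2 + γ / 4) / (1 / 2 - γ / 4)))
    (Z : ℕ → Fin m → ℝ) (hZ : ∀ i ≤ K, ∀ j, 0 < Z i j)
    (hupd : ∀ i < K, ∀ j,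
      Z (i + 1) j / Z i j = Real.exp η ∨ Z (i + 1) j / Z i j = Real.exp (-η))
    (Dd : ℕ → Fin m → ℝ) (hD : ∀ i j, Dd i j = Z i j / ∑ k, Z i k)
    (R : ℝ) (hR : 0 ≤ R) :
    ∀ i ≤ K, ∀ i' ≤ K, |(i : ℝ) - (i' : ℝ)| ≤ R →
      maxDiv (Dd i) (Dd i') ≤ 2 * γ * R ∧
      maxDiv (Dd i') (Dd i) ≤ 2 * γ * R ∧
      Indist (2 * γ * R) 0 (Dd i) (Dd i') := by
  haveI : Nonempty (Fin m) := ⟨⟨0, hm⟩⟩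
  have hd4 : (0:ℝ) < 1/2 - γ/4 := by linarith
  have hη0 : 0 ≤ η := by
    rw [hη]
    have h1 : (1:ℝ) ≤ (1/2 + γ/4)/(1/2 - γ/4) := by
      rw [le_div_iff₀ hd4]; linarith
    have := Real.log_nonneg h1
    linarith
  have hηγ : η ≤ γ := by
    rw [hη]
    have h2 : (1/2 + γ/4)/(1/2 - γ/4) ≤ Real.exp (2*γ) := by
      rw [div_le_iff₀ hd4]
      nlinarith [Real.add_one_le_exp (2*γ)]
    have h3 := Real.log_le_log (by positivity) h2
    rw [Real.log_exp] at h3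
    linarith
  have hS : ∀ i ≤ K, 0 < ∑ k, Z i k := by
    intro i hi
    exact Finset.sum_pos (fun k _ => hZ i hi k) Finset.univ_nonempty
  have step : ∀ i < K, ∀ j,
      Z (i+1) j ≤ Real.exp η * Z i j ∧ Z i j ≤ Real.exp η * Z (i+1) j := by
    intro i hi j
    have hzi := hZ i (le_of_lt hi) j
    have hzi1 := hZ (i+1) hi j
    have h1 : (1:ℝ) ≤ Real.exp η := Real.one_le_exp hη0
    rcases hupd i hi j with h | h
    · have heq : Z (i+1) j = Real.exp η * Z i j := by
        field_simp at h; linarith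
      constructor
      · linarith
      · rw [heq]; nlinarith
    · have heq : Z (i+1) j = Real.exp (-η) * Z i j := by
        field_simp at h; linarith
      have hee : Real.exp η * Real.exp (-η) = 1 := by
        rw [← Real.exp_add]; simp
      constructor
      · have hle : Real.exp (-η) ≤ Real.exp η := Real.exp_le_exp.2 (by linarith)
        nlinarith
      · rw [heq]; nlinarith
  have chain : ∀ n : ℕ, ∀ a, a + n ≤ K → ∀ j,
      Z (a+n) j ≤ Real.exp (η*n) * Z a j ∧ Z a j ≤ Real.exp (η*n) * Z (a+n) j := by
    intro n
    induction n with
    | zero => intro a _ j; simp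
    | succ n ih =>
      intro a ha j
      have h1 := ih a (by omega) j
      have h2 := step (a+n) (by omega) j
      have he : Real.exp η * Real.exp (η*n) = Real.exp (η*(n+1)) := by
        rw [← Real.exp_add]; ring_nf
      have hep := (Real.exp_pos η).le
      constructor
      · calc Z (a+(n+1)) j = Z (a+n+1) j := by ring_nf
          _ ≤ Real.exp η * Z (a+n) j := h2.1
          _ ≤ Real.exp η * (Real.exp (η*n) * Z a j) :=
              mul_le_mul_of_nonneg_left h1.1 hep
          _ = Real.exp (η*((n:ℕ)+1:ℕ)) * Z a j := by push_cast; rw [← he]; ring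
      · calc Z a j ≤ Real.exp (η*n) * Z (a+n) j := h1.2
          _ ≤ Real.exp (η*n) * (Real.exp η * Z (a+n+1) j) :=
              mul_le_mul_of_nonneg_left h2.2 (Real.exp_pos _).le
          _ = Real.exp (η*((n:ℕ)+1:ℕ)) * Z (a+(n+1)) j := by
              push_cast; rw [← he]; ring_nf
  have zkey : ∀ a ≤ K, ∀ b ≤ K, ∀ j,
      Z a j ≤ Real.exp (η * |(a:ℝ) - (b:ℝ)|) * Z b j := by
    intro a ha b hb j
    rcases le_total a b with hab | hab
    · obtain ⟨n, rfl⟩ : ∃ n, b = a + n := ⟨b - a, by omega⟩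
      have habs : |(a:ℝ) - ((a + n : ℕ):ℝ)| = (n:ℝ) := by
        push_cast
        rw [abs_sub_comm, abs_of_nonneg (by linarith [Nat.cast_nonneg (α := ℝ) n])]
        ring
      rw [habs]
      exact (chain n a hb j).2
    · obtain ⟨n, rfl⟩ : ∃ n, a = b + n := ⟨a - b, by omega⟩
      have habs : |((b + n : ℕ):ℝ) - (b:ℝ)| = (n:ℝ) := by
        push_cast
        rw [abs_of_nonneg (by linarith [Nat.cast_nonneg (α := ℝ) n])]
        ring
      rw [habs]
      exact (chain n b ha j).1
  have pair : ∀ a ≤ K, ∀ b ≤ K, |(a:ℝ) - (b:ℝ)| ≤ R → ∀ j,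
      Dd a j ≤ Real.exp (2 * γ * R) * Dd b j := by
    intro a ha b hb hab j
    set d := |(a:ℝ) - (b:ℝ)| with hdd
    have hd0 : 0 ≤ d := abs_nonneg _
    set E := Real.exp (η * d) with hE
    have h1 : Z a j ≤ E * Z b j := zkey a ha b hb j
    have h2 : (∑ k, Z b k) ≤ E * ∑ k, Z a k := by
      have : ∀ k ∈ Finset.univ, Z b k ≤ E * Z a k := by
        intro k _
        have := zkey b hb a ha k
        rwa [abs_sub_comm] at this
      calc (∑ k, Z b k) ≤ ∑ k, E * Z a k := Finset.sum_le_sum this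
        _ = E * ∑ k, Z a k := by rw [Finset.mul_sum]
    have hSa := hS a ha
    have hSb := hS b hb
    have hE2 : E * E ≤ Real.exp (2 * γ * R) := by
      rw [hE, ← Real.exp_add]
      apply Real.exp_le_exp.2
      nlinarith
    have hcross : Z a j * (∑ k, Z b k) ≤ Real.exp (2*γ*R) * Z b j * (∑ k, Z a k) := by
      calc Z a j * (∑ k, Z b k) ≤ (E * Z b j) * (E * ∑ k, Z a k) :=
            mul_le_mul h1 h2 hSb.le (mul_nonneg (Real.exp_pos _).le (hZ b hb j).le)
        _ = (E * E) * (Z b j * ∑ k, Z a k) := by ring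
        _ ≤ Real.exp (2*γ*R) * (Z b j * ∑ k, Z a k) := by
            exact mul_le_mul_of_nonneg_right hE2 (mul_nonneg (hZ b hb j).le hSa.le)
        _ = Real.exp (2*γ*R) * Z b j * (∑ k, Z a k) := by ring
    rw [hD a j, hD b j, ← mul_div_assoc, div_le_div_iff₀ hSa hSb]
    exact hcross
  have hDpos : ∀ a ≤ K, ∀ j, 0 < Dd a j := by
    intro a ha j
    rw [hD]
    exact div_pos (hZ a ha j) (hS a ha)
  have mdiv : ∀ a ≤ K, ∀ b ≤ K, |(a:ℝ) - (b:ℝ)| ≤ R → maxDiv (Dd a) (Dd b) ≤ 2*γ*R := by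
    intro a ha b hb hab
    have hbound : ∀ j, Dd a j / Dd b j ≤ Real.exp (2*γ*R) := by
      intro j
      rw [div_le_iff₀ (hDpos b hb j)]
      exact pair a ha b hb hab j
    have hne : (Set.range fun j => Dd a j / Dd b j).Nonempty := Set.range_nonempty _
    have hsup_le : sSup (Set.range fun j => Dd a j / Dd b j) ≤ Real.exp (2*γ*R) :=
      csSup_le hne (by rintro x ⟨j, rfl⟩; exact hbound j)
    have hbdd : BddAbove (Set.range fun j => Dd a j / Dd b j) :=
      ⟨Real.exp (2*γ*R), by rintro x ⟨j, rfl⟩; exact hbound j⟩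
    have hsup_pos : 0 < sSup (Set.range fun j => Dd a j / Dd b j) := by
      obtain ⟨j⟩ := ‹Nonempty (Fin m)›
      exact lt_of_lt_of_le (div_pos (hDpos a ha j) (hDpos b hb j))
        (le_csSup hbdd ⟨j, rfl⟩)
    unfold maxDiv
    calc Real.log (sSup (Set.range fun j => Dd a j / Dd b j))
        ≤ Real.log (Real.exp (2*γ*R)) := Real.log_le_log hsup_pos hsup_le
      _ = 2*γ*R := Real.log_exp _
  intro i hi i' hi' habs
  have habs' : |(i':ℝ) - (i:ℝ)| ≤ R := by rwa [abs_sub_comm]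
  refine ⟨mdiv i hi i' hi' habs, mdiv i' hi' i hi habs', ?_⟩
  intro Ev
  constructor
  · rw [add_zero, Finset.mul_sum]
    exact Finset.sum_le_sum fun j _ => pair i hi i' hi' habs j
  · rw [add_zero, Finset.mul_sum]
    exact Finset.sum_le_sum fun j _ => pair i' hi' i hi habs' j

end
end

section
/- Let c' ≥ 1, d ≥ 1, R ≥ 1 be reals, let γ ∈ (0, 1/2) satisfy 2γR ≤ 1, and let n be a positive integer with n ≤ c'·d/γ². If D and D' are (2γR, 0)-indistinguishable probability distributions on a finite set S, then the product distributions D^n and (D')^n on S^n are (12·c'·d·R², 1/4)-indistinguishable. -/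
open Finset

noncomputable section

/-- `D` is a probability vector on the finite type `α`. -/
def IsDist {α : Type*} [Fintype α] (D : α → ℝ) : Prop :=
  (∀ a, 0 ≤ D a) ∧ ∑ a, D a = 1

/-- For `0 ≤ x ≤ 1`, `e^x + e^{-x} - 1 ≤ e^{2x²}`. -/
lemma exp_add_exp_neg_sub_one_le {x : ℝ} (hx0 : 0 ≤ x) (hx1 : x ≤ 1) :
    Real.exp x + Real.exp (-x) - 1 ≤ Real.exp (2 * x ^ 2) := by
  have habs : |x| ≤ 1 := by rwa [abs_of_nonneg hx0]
  have habs' : |(-x)| ≤ 1 := by rwa [abs_neg]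
  have h1 := Real.exp_bound habs (n := 2) (by norm_num)
  have h2 := Real.exp_bound habs' (n := 2) (by norm_num)
  have e1 : Real.exp x ≤ 1 + x + 3 / 4 * x ^ 2 := by
    have := (abs_sub_le_iff.1 h1).1
    simp [Finset.sum_range_succ, abs_of_nonneg hx0] at this ⊢
    nlinarith [sq_nonneg x]
  have e2 : Real.exp (-x) ≤ 1 - x + 3 / 4 * x ^ 2 := by
    have := (abs_sub_le_iff.1 h2).1
    simp [Finset.sum_range_succ, abs_of_nonneg hx0] at this ⊢
    nlinarith [sq_nonneg x]
  have e3 : 1 + 2 * x ^ 2 ≤ Real.exp (2 * x ^ 2) := by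
    have := Real.add_one_le_exp (2 * x ^ 2)
    linarith
  nlinarith [sq_nonneg x]

/-- Half of the key bound, proved by a second-moment (Markov) argument. -/
lemma key_half {S : Type*} [Fintype S] (ε₀ ε : ℝ) (n : ℕ)
    (hM : (Real.exp ε₀ + Real.exp (-ε₀) - 1) ^ n * 4 ≤ Real.exp ε)
    (D D' : S → ℝ) (hD : IsDist D) (hD' : IsDist D')
    (h1 : ∀ a, D a ≤ Real.exp ε₀ * D' a) (h2 : ∀ a, D' a ≤ Real.exp ε₀ * D a)
    (E : Finset (Fin n → S)) :
    ∑ f ∈ E, ∏ i, D (f i) ≤ Real.exp ε * ∑ f ∈ E, ∏ i, D' (f i) + 1 / 4 := by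
  classical
  obtain ⟨hDpos, hDsum⟩ := hD
  obtain ⟨hD'pos, hD'sum⟩ := hD'
  set P : (Fin n → S) → ℝ := fun f => ∏ i, D (f i) with hPdef
  set Q : (Fin n → S) → ℝ := fun f => ∏ i, D' (f i) with hQdef
  have hPnn : ∀ f, 0 ≤ P f := fun f => Finset.prod_nonneg fun i _ => hDpos _
  have hQnn : ∀ f, 0 ≤ Q f := fun f => Finset.prod_nonneg fun i _ => hD'pos _
  have hQ0 : ∀ f, Q f = 0 → P f = 0 := by
    intro f hf
    obtain ⟨i, _, hi⟩ := Finset.prod_eq_zero_iff.mp hf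
    refine Finset.prod_eq_zero (Finset.mem_univ i) ?_
    have := h1 (f i)
    rw [hi] at this
    have := hDpos (f i)
    linarith
  have hprodexp : Real.exp ε₀ * Real.exp (-ε₀) = 1 := by
    rw [← Real.exp_add]; simp
  -- pointwise second-moment bound
  have hs : ∀ a, D a ^ 2 / D' a ≤ (Real.exp ε₀ + Real.exp (-ε₀)) * D a - D' a := by
    intro a
    rcases eq_or_lt_of_le (hD'pos a) with h0 | h0
    · have hDa : D a = 0 := by
        have := h1 a; rw [← h0] at this
        have := hDpos a; linarith
      simp [hDa, ← h0]
    · rw [div_le_iff₀ h0]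
      have ha := h1 a
      have hb := h2 a
      have hen : 0 < Real.exp (-ε₀) := Real.exp_pos _
      have hb' : Real.exp (-ε₀) * D' a ≤ D a := by
        have key : Real.exp (-ε₀) * (Real.exp ε₀ * D a) = D a := by
          rw [← mul_assoc, mul_comm (Real.exp (-ε₀)), hprodexp, one_mul]
        have := mul_le_mul_of_nonneg_left hb hen.le
        linarith
      have hDD : Real.exp ε₀ * Real.exp (-ε₀) * (D' a) ^ 2 = (D' a) ^ 2 := by
        rw [hprodexp]; ring
      nlinarith [mul_nonneg (sub_nonneg.mpr ha) (sub_nonneg.mpr hb'), hDD]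
  have hsnn : 0 ≤ ∑ a, D a ^ 2 / D' a :=
    Finset.sum_nonneg fun a _ => div_nonneg (sq_nonneg _) (hD'pos a)
  have hsum : ∑ a, D a ^ 2 / D' a ≤ Real.exp ε₀ + Real.exp (-ε₀) - 1 := by
    calc ∑ a, D a ^ 2 / D' a
        ≤ ∑ a, ((Real.exp ε₀ + Real.exp (-ε₀)) * D a - D' a) :=
          Finset.sum_le_sum fun a _ => hs a
      _ = (Real.exp ε₀ + Real.exp (-ε₀)) * (∑ a, D a) - ∑ a, D' a := by
          rw [Finset.sum_sub_distrib, Finset.mul_sum]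
      _ = Real.exp ε₀ + Real.exp (-ε₀) - 1 := by rw [hDsum, hD'sum]; ring
  -- total second moment of the product
  have hTsum : ∑ f : Fin n → S, ∏ i, (D (f i) ^ 2 / D' (f i))
      = (∑ a, D a ^ 2 / D' a) ^ n := by
    rw [Finset.sum_pow' Finset.univ (fun a => D a ^ 2 / D' a) n,
      Fintype.piFinset_univ]
  have hTnn : ∀ f : Fin n → S, 0 ≤ ∏ i, (D (f i) ^ 2 / D' (f i)) :=
    fun f => Finset.prod_nonneg fun i _ => div_nonneg (sq_nonneg _) (hD'pos _)
  -- split into good and bad events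
  have hsplit := Finset.sum_filter_add_sum_filter_not E
    (fun f => P f ≤ Real.exp ε * Q f) P
  have hGood : ∑ f ∈ E.filter (fun f => P f ≤ Real.exp ε * Q f), P f
      ≤ Real.exp ε * ∑ f ∈ E, Q f := by
    calc ∑ f ∈ E.filter (fun f => P f ≤ Real.exp ε * Q f), P f
        ≤ ∑ f ∈ E.filter (fun f => P f ≤ Real.exp ε * Q f), Real.exp ε * Q f :=
          Finset.sum_le_sum fun f hf => (Finset.mem_filter.mp hf).2
      _ = Real.exp ε * ∑ f ∈ E.filter (fun f => P f ≤ Real.exp ε * Q f), Q f :=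
          (Finset.mul_sum _ _ _).symm
      _ ≤ Real.exp ε * ∑ f ∈ E, Q f := by
          refine mul_le_mul_of_nonneg_left ?_ (Real.exp_pos ε).le
          exact Finset.sum_le_sum_of_subset_of_nonneg (Finset.filter_subset _ _)
            (fun f _ _ => hQnn f)
  have hBad : ∑ f ∈ E.filter (fun f => ¬ (P f ≤ Real.exp ε * Q f)), P f ≤ 1 / 4 := by
    have step1 : ∀ f ∈ E.filter (fun f => ¬ (P f ≤ Real.exp ε * Q f)),
        P f ≤ Real.exp (-ε) * ∏ i, (D (f i) ^ 2 / D' (f i)) := by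
      intro f hf
      have hf' : Real.exp ε * Q f < P f := lt_of_not_ge (Finset.mem_filter.mp hf).2
      have hQpos : 0 < Q f := by
        rcases (hQnn f).lt_or_eq with h0 | h0
        · exact h0
        · exfalso
          have hp := hQ0 f h0.symm
          rw [hp, ← h0] at hf'
          simp at hf'
      have hT : (∏ i, (D (f i) ^ 2 / D' (f i))) = P f ^ 2 / Q f := by
        rw [Finset.prod_div_distrib, Finset.prod_pow]
      have hstep : Real.exp ε * P f ≤ P f ^ 2 / Q f := by
        rw [le_div_iff₀ hQpos]
        nlinarith [hPnn f, hf'.le, hQnn f]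
      calc P f = Real.exp (-ε) * (Real.exp ε * P f) := by
            rw [← mul_assoc, ← Real.exp_add]; simp
        _ ≤ Real.exp (-ε) * (P f ^ 2 / Q f) :=
            mul_le_mul_of_nonneg_left hstep (Real.exp_pos _).le
        _ = Real.exp (-ε) * ∏ i, (D (f i) ^ 2 / D' (f i)) := by rw [hT]
    have hMnn0 : 0 ≤ Real.exp ε₀ + Real.exp (-ε₀) - 1 := by
      nlinarith [sq_nonneg (Real.exp ε₀ - 1), Real.exp_pos ε₀, hprodexp]
    calc ∑ f ∈ E.filter (fun f => ¬ (P f ≤ Real.exp ε * Q f)), P f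
        ≤ ∑ f ∈ E.filter (fun f => ¬ (P f ≤ Real.exp ε * Q f)),
            Real.exp (-ε) * ∏ i, (D (f i) ^ 2 / D' (f i)) :=
          Finset.sum_le_sum step1
      _ ≤ ∑ f : Fin n → S, Real.exp (-ε) * ∏ i, (D (f i) ^ 2 / D' (f i)) :=
          Finset.sum_le_sum_of_subset_of_nonneg (Finset.subset_univ _)
            (fun f _ _ => mul_nonneg (Real.exp_pos _).le (hTnn f))
      _ = Real.exp (-ε) * (∑ a, D a ^ 2 / D' a) ^ n := by
          rw [← Finset.mul_sum, hTsum]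
      _ ≤ Real.exp (-ε) * (Real.exp ε₀ + Real.exp (-ε₀) - 1) ^ n := by
          refine mul_le_mul_of_nonneg_left ?_ (Real.exp_pos _).le
          exact pow_le_pow_left₀ hsnn hsum n
      _ ≤ 1 / 4 := by
          rw [Real.exp_neg, inv_mul_le_iff₀ (Real.exp_pos ε)]
          linarith
  calc ∑ f ∈ E, P f
      = ∑ f ∈ E.filter (fun f => P f ≤ Real.exp ε * Q f), P f
        + ∑ f ∈ E.filter (fun f => ¬ (P f ≤ Real.exp ε * Q f)), P f := hsplit.symm
    _ ≤ Real.exp ε * ∑ f ∈ E, Q f + 1 / 4 := add_le_add hGood hBad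

/-- **Indistinguishability of product distributions of nearby boosting distributions.**
Let `c' ≥ 1`, `d ≥ 1`, `R ≥ 1` be reals, `γ ∈ (0, 1/2)` with `2γR ≤ 1`, and `n` a
positive integer with `n ≤ c'd/γ²`. If `D, D'` are `(2γR, 0)`-indistinguishable
probability distributions on a finite set `S`, then the `n`-fold products `Dⁿ`, `(D')ⁿ`
are `(12c'dR², 1/4)`-indistinguishable. -/
theorem product_indistinguishability
    (c' d R : ℝ) (hc' : 1 ≤ c') (hd : 1 ≤ d) (hR : 1 ≤ R)
    (γ : ℝ) (hγ0 : 0 < γ) (hγ1 : γ < 1 / 2) (hγR : 2 * γ * R ≤ 1)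
    (n : ℕ) (hn : 0 < n) (hnle : (n : ℝ) ≤ c' * d / γ ^ 2)
    {S : Type*} [Fintype S]
    (D D' : S → ℝ) (hD : IsDist D) (hD' : IsDist D')
    (h : Indist (2 * γ * R) 0 D D') :
    Indist (12 * c' * d * R ^ 2) (1 / 4)
      (fun f : Fin n → S => ∏ i, D (f i)) (fun f : Fin n → S => ∏ i, D' (f i)) := by
  set ε₀ : ℝ := 2 * γ * R with hε₀def
  have hε₀0 : 0 ≤ ε₀ := by positivity
  have h1 : ∀ a, D a ≤ Real.exp ε₀ * D' a := by
    intro a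
    have := (h {a}).1
    simpa using this
  have h2 : ∀ a, D' a ≤ Real.exp ε₀ * D a := by
    intro a
    have := (h {a}).2
    simpa using this
  -- the arithmetic bound
  have hγ2n : γ ^ 2 * (n : ℝ) ≤ c' * d := by
    have hγ2 : 0 < γ ^ 2 := by positivity
    rw [div_eq_mul_inv] at hnle
    calc γ ^ 2 * (n : ℝ) ≤ γ ^ 2 * (c' * d * (γ ^ 2)⁻¹) :=
          mul_le_mul_of_nonneg_left hnle hγ2.le
      _ = c' * d := by field_simp
  have hcd : (1 : ℝ) ≤ c' * d := by nlinarith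
  have hR2 : (1 : ℝ) ≤ R ^ 2 := by nlinarith
  have hcdR : 1 ≤ c' * d * R ^ 2 := by
    nlinarith [mul_le_mul hcd hR2 zero_le_one (by linarith : (0:ℝ) ≤ c' * d)]
  have hM : (Real.exp ε₀ + Real.exp (-ε₀) - 1) ^ n * 4
      ≤ Real.exp (12 * c' * d * R ^ 2) := by
    have hMle : Real.exp ε₀ + Real.exp (-ε₀) - 1 ≤ Real.exp (2 * ε₀ ^ 2) :=
      exp_add_exp_neg_sub_one_le hε₀0 hγR
    have hprodexp : Real.exp ε₀ * Real.exp (-ε₀) = 1 := by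
      rw [← Real.exp_add]; simp
    have hMnn0 : 0 ≤ Real.exp ε₀ + Real.exp (-ε₀) - 1 := by
      nlinarith [sq_nonneg (Real.exp ε₀ - 1), Real.exp_pos ε₀]
    have hpow : (Real.exp ε₀ + Real.exp (-ε₀) - 1) ^ n
        ≤ Real.exp ((n : ℝ) * (2 * ε₀ ^ 2)) := by
      rw [Real.exp_nat_mul]
      exact pow_le_pow_left₀ hMnn0 hMle n
    have hexp1 : (n : ℝ) * (2 * ε₀ ^ 2) ≤ 8 * c' * d * R ^ 2 := by
      have : ε₀ ^ 2 = 4 * γ ^ 2 * R ^ 2 := by rw [hε₀def]; ring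
      rw [this]
      nlinarith [sq_nonneg R]
    have h4 : (4 : ℝ) ≤ Real.exp (4 * c' * d * R ^ 2) := by
      have := Real.add_one_le_exp (4 * c' * d * R ^ 2)
      nlinarith
    calc (Real.exp ε₀ + Real.exp (-ε₀) - 1) ^ n * 4
        ≤ Real.exp (8 * c' * d * R ^ 2) * Real.exp (4 * c' * d * R ^ 2) := by
          refine mul_le_mul ?_ h4 (by norm_num) (Real.exp_pos _).le
          exact hpow.trans (Real.exp_le_exp.mpr hexp1)
      _ = Real.exp (12 * c' * d * R ^ 2) := by
          rw [← Real.exp_add]; ring_nf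
  intro E
  exact ⟨key_half ε₀ _ n hM D D' hD hD' h1 h2 E,
    key_half ε₀ _ n hM D' D hD' hD h2 h1 E⟩

end
end

section
/- Let m ≥ 1 be an integer and γ ∈ (0, 1/2] a real, and set w = (1/2)·ln((1/2 + γ/4)/(1/2 − γ/4)). Let Z_1, …, Z_m be positive reals with Z = Σ_{i=1}^m Z_i, and let D be the distribution on [m] with D(i) = Z_i/Z. Let σ_1, …, σ_m ∈ {±1} be signs (σ_i = c(x_i)·h(x_i), where h agrees with the labeling c exactly when σ_i = +1) and suppose Σ_{i : σ_i = −1} D(i) ≤ 1/2 − γ/4. Define Z'_i = Z_i·exp(−σ_i·w) and Z' = Σ_{i=1}^m Z'_i. Then Z' ≤ Z·√(1 − γ²/4). -/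
open Finset

/-!
With `x = γ / 2` the step size is `w = artanh x`. Since every `σᵢ = ±1`, each factor
`exp (-σᵢ w)` equals `cosh w - σᵢ sinh w`, so `Z' = Z cosh w - (∑ Zᵢ σᵢ) sinh w`. The weighted
error bound says that the edge `∑ Zᵢ σᵢ = Z - 2 ∑_{σᵢ = -1} Zᵢ` is at least `x Z`, and
`cosh (artanh x) - x sinh (artanh x) = √(1 - x²)`.
-/

namespace Real

theorem exp_neg_mul_eq_cosh_sub_mul_sinh {s : ℝ} (hs : s = 1 ∨ s = -1) (w : ℝ) :
    exp (-s * w) = cosh w - s * sinh w := by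
  rcases hs with rfl | rfl
  · simp [← cosh_sub_sinh]
  · simp [← cosh_add_sinh]

theorem cosh_artanh_sub_mul_sinh_artanh {x : ℝ} (hx : x ∈ Set.Ioo (-1) 1) :
    cosh (artanh x) - x * sinh (artanh x) = √(1 - x ^ 2) := by
  rw [cosh_artanh hx, sinh_artanh hx, mul_div_assoc', ← sq, div_sub_div_same, div_sqrt]

end Real

theorem le_mul_of_div_le_of_le {x y c : ℝ} (hxy : x ≤ y) (hy : 0 ≤ y) (h : x / y ≤ c) :
    x ≤ c * y := by
  rcases hy.eq_or_lt with rfl | hy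
  · simpa using hxy
  · exact (div_le_iff₀ hy).1 h

section SignedSums

variable {ι : Type*} (s : Finset ι) (Z σ : ι → ℝ)

theorem sum_mul_sign_eq_sub_two_mul_sum_filter (hσ : ∀ i ∈ s, σ i = 1 ∨ σ i = -1) :
    ∑ i ∈ s, Z i * σ i = ∑ i ∈ s, Z i - 2 * ∑ i ∈ s with σ i = -1, Z i := by
  rw [sum_filter, mul_sum, ← sum_sub_distrib]
  refine sum_congr rfl fun i hi => ?_
  rcases hσ i hi with h | h
  · norm_num [h]
  · norm_num [h]
    ring

theorem sum_mul_exp_neg_sign_mul (hσ : ∀ i ∈ s, σ i = 1 ∨ σ i = -1) (w : ℝ) :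
    ∑ i ∈ s, Z i * Real.exp (-σ i * w) =
      (∑ i ∈ s, Z i) * Real.cosh w - (∑ i ∈ s, Z i * σ i) * Real.sinh w := by
  simp only [sum_mul, ← sum_sub_distrib]
  refine sum_congr rfl fun i hi => ?_
  rw [Real.exp_neg_mul_eq_cosh_sub_mul_sinh (hσ i hi)]
  ring

end SignedSums

theorem adaboost_exp_loss_step_general
    (m : ℕ)
    (γ : ℝ) (hγ0 : 0 < γ) (hγ1 : γ ≤ 1 / 2)
    (w : ℝ) (hw : w = (1 / 2) * Real.log ((1 / 2 + γ / 4) / (1 / 2 - γ / 4)))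
    (Z : Fin m → ℝ) (hZ : ∀ i, 0 < Z i)
    (σ : Fin m → ℝ) (hσ : ∀ i, σ i = 1 ∨ σ i = -1)
    (herr : ∑ i ∈ univ.filter (fun i => σ i = -1), Z i / (∑ j, Z j) ≤ 1 / 2 - γ / 4) :
    ∑ i, Z i * Real.exp (-σ i * w) ≤ (∑ i, Z i) * Real.sqrt (1 - γ ^ 2 / 4) := by
  have hx : γ / 2 ∈ Set.Ioo (-1) 1 := ⟨by linarith, by linarith⟩
  have hw' : w = Real.artanh (γ / 2) := by
    rw [hw, Real.artanh_eq_half_log (Set.Ioo_subset_Icc_self hx)]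
    congr 2
    rw [div_eq_div_iff (by linarith) (by linarith)]
    ring
  have hS : 0 ≤ ∑ j, Z j := sum_nonneg fun i _ => (hZ i).le
  have herr' : ∑ i with σ i = -1, Z i ≤ (1 / 2 - γ / 4) * ∑ j, Z j :=
    le_mul_of_div_le_of_le (sum_le_sum_of_subset_of_nonneg (filter_subset _ _)
      fun i _ _ => (hZ i).le) hS (by rwa [← sum_div] at herr)
  have hedge : γ / 2 * ∑ j, Z j ≤ ∑ i, Z i * σ i := by
    rw [sum_mul_sign_eq_sub_two_mul_sum_filter _ _ _ fun i _ => hσ i]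
    linarith
  have hsinh : 0 ≤ Real.sinh w :=
    Real.sinh_nonneg_iff.2 (hw' ▸ (Real.artanh_pos ⟨by linarith, hx.2⟩).le)
  calc ∑ i, Z i * Real.exp (-σ i * w)
      = (∑ i, Z i) * Real.cosh w - (∑ i, Z i * σ i) * Real.sinh w :=
        sum_mul_exp_neg_sign_mul _ _ _ (fun i _ => hσ i) w
    _ ≤ (∑ i, Z i) * Real.cosh w - (γ / 2 * ∑ j, Z j) * Real.sinh w := by gcongr
    _ = (∑ i, Z i) * (Real.cosh w - γ / 2 * Real.sinh w) := by ring
    _ = (∑ i, Z i) * Real.sqrt (1 - γ ^ 2 / 4) := by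
      rw [hw', Real.cosh_artanh_sub_mul_sinh_artanh hx]
      congr 2
      ring

/-- **Single-step exponential-loss decrease in AdaBoost.**
Let `m ≥ 1`, `γ ∈ (0, 1/2]`, and `w = (1/2)·ln((1/2 + γ/4)/(1/2 - γ/4))`. Let
`Z₁, …, Z_m > 0` with `Z = Σ Zᵢ` and `D(i) = Zᵢ/Z`. Let `σᵢ ∈ {±1}` with
`Σ_{i : σᵢ = -1} D(i) ≤ 1/2 - γ/4`, and set `Z'ᵢ = Zᵢ·exp(-σᵢw)`, `Z' = Σ Z'ᵢ`.
Then `Z' ≤ Z·√(1 - γ²/4)`. -/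
theorem adaboost_exp_loss_step
    (m : ℕ) (hm : 1 ≤ m)
    (γ : ℝ) (hγ0 : 0 < γ) (hγ1 : γ ≤ 1 / 2)
    (w : ℝ) (hw : w = (1 / 2) * Real.log ((1 / 2 + γ / 4) / (1 / 2 - γ / 4)))
    (Z : Fin m → ℝ) (hZ : ∀ i, 0 < Z i)
    (σ : Fin m → ℝ) (hσ : ∀ i, σ i = 1 ∨ σ i = -1)
    (herr : ∑ i ∈ univ.filter (fun i => σ i = -1), Z i / (∑ j, Z j) ≤ 1 / 2 - γ / 4) :
    ∑ i, Z i * Real.exp (-σ i * w) ≤ (∑ i, Z i) * Real.sqrt (1 - γ ^ 2 / 4) :=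
  adaboost_exp_loss_step_general m γ hγ0 hγ1 w hw Z hZ σ hσ herr
end

section
/- Let m ≥ 2 and K ≥ 1 be integers, γ ∈ (0, 1/2] a real with K ≥ 16·ln(m)/γ², and w = (1/2)·ln((1/2 + γ/4)/(1/2 − γ/4)). Let σ_{r,i} ∈ {±1} for r ∈ {0, …, K−1} and i ∈ {1, …, m}, and suppose Σ_{i=1}^m exp(−w·Σ_{r=0}^{K−1} σ_{r,i}) ≤ m·(1 − γ²/4)^{K/2}. Then for every i ∈ {1, …, m}, the average margin satisfies (1/K)·Σ_{r=0}^{K−1} σ_{r,i} ≥ γ/16. -/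
open Finset

noncomputable section

/-- **Large margins from a small exponential loss.**
Let `m ≥ 2`, `K ≥ 1`, `γ ∈ (0, 1/2]` with `K ≥ 16·ln(m)/γ²`, and
`w = (1/2)·ln((1/2 + γ/4)/(1/2 - γ/4))`. Let `σ_{r,i} ∈ {±1}` satisfy
`Σᵢ exp(-w·Σᵣ σ_{r,i}) ≤ m·(1 - γ²/4)^{K/2}`. Then for every `i` the average margin
satisfies `(1/K)·Σᵣ σ_{r,i} ≥ γ/16`. -/
theorem large_margin_from_exp_loss
    (m K : ℕ) (hm : 2 ≤ m) (hK : 1 ≤ K)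
    (γ : ℝ) (hγ0 : 0 < γ) (hγ1 : γ ≤ 1 / 2)
    (hKγ : 16 * Real.log m / γ ^ 2 ≤ (K : ℝ))
    (w : ℝ) (hw : w = (1 / 2) * Real.log ((1 / 2 + γ / 4) / (1 / 2 - γ / 4)))
    (σ : Fin K → Fin m → ℝ) (hσ : ∀ r i, σ r i = 1 ∨ σ r i = -1)
    (hloss : ∑ i, Real.exp (-w * ∑ r, σ r i) ≤
      (m : ℝ) * (1 - γ ^ 2 / 4) ^ ((K : ℝ) / 2)) :
    ∀ i, γ / 16 ≤ (1 / (K : ℝ)) * ∑ r, σ r i := by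
  intro i
  have hKpos : (0:ℝ) < K := by exact_mod_cast hK
  have hmpos : (0:ℝ) < m := by positivity
  -- properties of w
  have hden : (0:ℝ) < 1 / 2 - γ / 4 := by linarith
  have hratio : (1:ℝ) < (1 / 2 + γ / 4) / (1 / 2 - γ / 4) := by
    rw [lt_div_iff₀ hden]; linarith
  have hwpos : 0 < w := by
    rw [hw]; have := Real.log_pos hratio; linarith
  have hwle : w ≤ γ := by
    have hlog : Real.log ((1 / 2 + γ / 4) / (1 / 2 - γ / 4)) ≤
        (1 / 2 + γ / 4) / (1 / 2 - γ / 4) - 1 :=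
      Real.log_le_sub_one_of_pos (by linarith)
    have hval : (1 / 2 + γ / 4) / (1 / 2 - γ / 4) - 1 ≤ 2 * γ := by
      rw [div_sub_one (ne_of_gt hden), div_le_iff₀ hden]
      nlinarith
    rw [hw]; linarith
  -- base of the power
  have hb : (0:ℝ) < 1 - γ ^ 2 / 4 := by nlinarith
  set S := ∑ r, σ r i with hS
  -- single term bound
  have h1 : Real.exp (-w * S) ≤ (m : ℝ) * (1 - γ ^ 2 / 4) ^ ((K : ℝ) / 2) := by
    refine le_trans ?_ hloss
    exact single_le_sum (f := fun j => Real.exp (-w * ∑ r, σ r j))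
      (fun j _ => (Real.exp_pos _).le) (mem_univ i)
  -- take logs
  have hrpos : (0:ℝ) < (m : ℝ) * (1 - γ ^ 2 / 4) ^ ((K : ℝ) / 2) := by
    exact mul_pos hmpos (Real.rpow_pos_of_pos hb _)
  have h2 : -w * S ≤ Real.log m + (K : ℝ) / 2 * Real.log (1 - γ ^ 2 / 4) := by
    have := Real.log_le_log (Real.exp_pos _) h1
    rwa [Real.log_exp, Real.log_mul (ne_of_gt hmpos)
      (ne_of_gt (Real.rpow_pos_of_pos hb _)), Real.log_rpow hb] at this
  -- log bounds
  have hlogb : Real.log (1 - γ ^ 2 / 4) ≤ -(γ ^ 2 / 4) := by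
    have := Real.log_le_sub_one_of_pos hb; linarith
  have hlogm : Real.log m ≤ (K : ℝ) * γ ^ 2 / 16 := by
    have hγ2 : (0:ℝ) < γ ^ 2 := by positivity
    rw [div_le_iff₀ hγ2] at hKγ
    nlinarith
  -- combine
  have h3 : (K : ℝ) * γ ^ 2 / 16 ≤ w * S := by
    have hK2 : (0:ℝ) ≤ (K : ℝ) / 2 := by positivity
    have := mul_le_mul_of_nonneg_left hlogb hK2
    nlinarith
  have h4 : (K : ℝ) * γ / 16 ≤ S := by
    have : w * ((K : ℝ) * γ / 16) ≤ w * S := by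
      refine le_trans ?_ h3
      nlinarith [mul_nonneg (mul_nonneg hKpos.le hγ0.le) (sub_nonneg.mpr hwle)]
    exact le_of_mul_le_mul_left this hwpos
  have h5 : γ / 16 ≤ S / K := by
    rw [le_div_iff₀ hKpos]; ring_nf; ring_nf at h4; linarith
  rw [one_div, inv_mul_eq_div]; exact h5

end
end
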